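/- arXiv:2502.00471 — 3 statements merged into one kernel-verified Lean document; each statement's English description precedes it below -/
import Mathlib

section
/- In the one-step ViSE model with a neutral Gaussian proposal generator (μ = 0), the expected capital gain of a group member is nonnegative for every integer threshold t. -/
open MeasureTheory ProbabilityTheory
open scoped Classical NNReal

/-!
Write `S = ∑_{j ∈ G} η_j`. Swapping two coordinates of `G` preserves the law of `η` and the
acceptance event `A`, so all group members have the same ECG, namely `E[S; A] / |G|`.
Negating the coordinates of `G` also preserves the law (the proposal is centred) and turns `S`
into `-S`, while it keeps the individualists' votes and can only remove the group's votes
when `S > 0`. Hence an outcome with `S > 0` is accepted whenever its reflection is, and pairing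
each outcome with its reflection gives `E[S; A] ≥ 0`.
-/

theorem MeasureTheory.setIntegral_nonneg_of_involutive {Ω : Type*} [MeasurableSpace Ω]
    {μ : Measure Ω} {R : Ω → Ω} (hR : MeasurePreserving R μ μ) (hinv : Function.Involutive R)
    {f : Ω → ℝ} (hf : Integrable f μ) (hfR : ∀ ω, f (R ω) = -f ω)
    {A : Set Ω} (hA : MeasurableSet A) (hAR : ∀ ω, 0 < f ω → R ω ∈ A → ω ∈ A) :
    0 ≤ ∫ ω in A, f ω ∂μ := by
  set φ := A.indicator f
  have hφ : Integrable φ μ := hf.indicator hA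
  have hφR : Integrable (fun ω => φ (R ω)) μ := hR.integrable_comp_of_integrable hφ
  have hpair : ∀ ω, 0 ≤ φ ω + φ (R ω) := by
    intro ω
    have hRA : f ω < 0 → ω ∈ A → R ω ∈ A := fun h hω =>
      hAR (R ω) (by linarith [hfR ω]) (by rwa [hinv ω])
    simp only [φ, Set.indicator_apply, hfR]
    split_ifs <;> grind
  have hsum := integral_nonneg (μ := μ) (f := fun ω => φ ω + φ (R ω)) hpair
  rw [integral_add hφ hφR,
    hR.integral_comp (MeasurableEquiv.ofInvolutive R hinv hR.measurable).measurableEmbedding,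
    integral_indicator hA] at hsum
  linarith

theorem MeasureTheory.measurePreserving_comp_perm {ι α : Type*} [Fintype ι] [MeasurableSpace α]
    (μ : Measure α) [SigmaFinite μ] (e : Equiv.Perm ι) :
    MeasurePreserving (fun ω : ι → α => ω ∘ e) (Measure.pi fun _ => μ)
      (Measure.pi fun _ => μ) := by
  convert measurePreserving_arrowCongr' (fun _ => μ) (fun _ => μ) e.symm (.refl α)
    fun _ => .id μ
  ext ω
  simp [MeasurableEquiv.arrowCongr', Equiv.arrowCongr']

namespace ViSE

section negOn

variable {ι : Type*} [DecidableEq ι] (G : Finset ι)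

def negOn (ω : ι → ℝ) : ι → ℝ :=
  fun i => if i ∈ G then -ω i else ω i

lemma negOn_involutive : Function.Involutive (negOn G) := by
  intro ω
  ext i
  by_cases hi : i ∈ G <;> simp [negOn, hi]

lemma sum_negOn (ω : ι → ℝ) : ∑ j ∈ G, negOn G ω j = -∑ j ∈ G, ω j := by
  rw [← Finset.sum_neg_distrib]
  exact Finset.sum_congr rfl fun j hj => if_pos hj

end negOn

variable {ι : Type*} [Fintype ι] [DecidableEq ι]

noncomputable def voters (G : Finset ι) (ω : ι → ℝ) : Finset ι :=
  Finset.univ.filter fun i => if i ∈ G then 0 < ∑ j ∈ G, ω j else 0 < ω i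

def accepted (G : Finset ι) (t : ℤ) : Set (ι → ℝ) :=
  {ω | t < ((voters G ω).card : ℤ)}

lemma measurable_card_voters (G : Finset ι) :
    Measurable fun ω : ι → ℝ => (voters G ω).card := by
  simp_rw [voters, Finset.card_filter]
  refine Finset.measurable_sum _ fun i _ => Measurable.ite ?_ measurable_const measurable_const
  split_ifs
  · exact measurableSet_lt measurable_const
      (Finset.measurable_sum _ fun j _ => measurable_pi_apply j)
  · exact measurableSet_lt measurable_const (measurable_pi_apply i)

lemma measurableSet_accepted (G : Finset ι) (t : ℤ) : MeasurableSet (accepted G t) :=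
  measurable_card_voters G (MeasurableSet.of_discrete (s := {k : ℕ | t < k}))

lemma voters_comp_perm (G : Finset ι) (ω : ι → ℝ) {e : Equiv.Perm ι}
    (he : ∀ i, e i ∈ G ↔ i ∈ G) :
    voters G (ω ∘ e) = (voters G ω).map e.symm.toEmbedding := by
  have hsum : ∑ j ∈ G, ω (e j) = ∑ j ∈ G, ω j :=
    Finset.sum_equiv e (fun i => (he i).symm) fun _ _ => rfl
  ext i
  simp [voters, Finset.mem_map_equiv, he, hsum]

lemma comp_perm_mem_accepted_iff {G : Finset ι} {t : ℤ} {e : Equiv.Perm ι}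
    (he : ∀ i, e i ∈ G ↔ i ∈ G) {ω : ι → ℝ} : ω ∘ e ∈ accepted G t ↔ ω ∈ accepted G t := by
  simp [accepted, voters_comp_perm G ω he]

lemma voters_negOn_subset {G : Finset ι} {ω : ι → ℝ} (hω : 0 ≤ ∑ j ∈ G, ω j) :
    voters G (negOn G ω) ⊆ voters G ω := by
  intro i
  simp only [voters, Finset.mem_filter, Finset.mem_univ, true_and, sum_negOn]
  split_ifs with hi
  · intro h; linarith
  · simp [negOn, hi]

lemma mem_accepted_of_negOn_mem {G : Finset ι} {t : ℤ} {ω : ι → ℝ} (hω : 0 ≤ ∑ j ∈ G, ω j)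
    (h : negOn G ω ∈ accepted G t) : ω ∈ accepted G t :=
  (show t < _ from h).trans_le (by exact_mod_cast Finset.card_le_card (voters_negOn_subset hω))

variable (μ : Measure ℝ)

lemma measurePreserving_negOn [SigmaFinite μ] (hμ : μ.map (fun x => -x) = μ) (G : Finset ι) :
    MeasurePreserving (negOn G) (Measure.pi fun _ : ι => μ) (Measure.pi fun _ : ι => μ) := by
  refine measurePreserving_pi _ _ (f := fun i x => if i ∈ G then -x else x) fun i => ?_
  by_cases hi : i ∈ G
  · simpa [hi] using MeasurePreserving.mk measurable_neg hμ
  · simp only [hi, if_false]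
    exact .id μ

lemma setIntegral_accepted_eval_eq [SigmaFinite μ] {G : Finset ι} (t : ℤ) {i j : ι}
    (hi : i ∈ G) (hj : j ∈ G) :
    ∫ ω in accepted G t, ω j ∂Measure.pi (fun _ => μ) =
      ∫ ω in accepted G t, ω i ∂Measure.pi (fun _ => μ) := by
  have hT := measurePreserving_comp_perm μ (Equiv.swap i j)
  have hswap : ∀ k, Equiv.swap i j k ∈ G ↔ k ∈ G := by
    intro k
    rw [Equiv.swap_apply_def]
    split_ifs <;> simp_all
  have hA : (fun ω : ι → ℝ => ω ∘ Equiv.swap i j) ⁻¹' accepted G t = accepted G t :=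
    Set.ext fun ω => comp_perm_mem_accepted_iff hswap
  calc ∫ ω in accepted G t, ω j ∂Measure.pi (fun _ => μ)
      = ∫ ω in accepted G t, ω j ∂(Measure.pi fun _ => μ).map (· ∘ Equiv.swap i j) := by
        rw [hT.map_eq]
    _ = ∫ ω in accepted G t, ω i ∂Measure.pi (fun _ => μ) := by
        rw [setIntegral_map (measurableSet_accepted G t)
          (measurable_pi_apply j).aestronglyMeasurable hT.measurable.aemeasurable, hA]
        simp only [Function.comp_apply, Equiv.swap_apply_right]

theorem setIntegral_accepted_eval_nonneg [IsProbabilityMeasure μ] (hμ : μ.map (fun x => -x) = μ)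
    (hint : Integrable id μ) {G : Finset ι} (t : ℤ) {i : ι} (hi : i ∈ G) :
    0 ≤ ∫ ω in accepted G t, ω i ∂Measure.pi (fun _ => μ) := by
  have hcoord (j : ι) : Integrable (fun ω : ι → ℝ => ω j) (Measure.pi fun _ => μ) :=
    (measurePreserving_eval (fun _ => μ) j).integrable_comp_of_integrable hint
  have hsum : ∫ ω in accepted G t, ∑ j ∈ G, ω j ∂Measure.pi (fun _ => μ) =
      G.card * ∫ ω in accepted G t, ω i ∂Measure.pi (fun _ => μ) := by
    rw [integral_finsetSum _ fun j _ => (hcoord j).integrableOn,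
      Finset.sum_congr rfl fun j hj => setIntegral_accepted_eval_eq μ t hi hj,
      Finset.sum_const, nsmul_eq_mul]
  have hgroup : 0 ≤ ∫ ω in accepted G t, ∑ j ∈ G, ω j ∂Measure.pi (fun _ => μ) :=
    setIntegral_nonneg_of_involutive (measurePreserving_negOn μ hμ G) (negOn_involutive G)
      (integrable_finsetSum _ fun j _ => hcoord j) (sum_negOn G) (measurableSet_accepted G t)
      fun _ hω => mem_accepted_of_negOn_mem hω.le
  rw [hsum] at hgroup
  exact nonneg_of_mul_nonneg_right hgroup (by exact_mod_cast Finset.card_pos.mpr ⟨i, hi⟩)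

end ViSE

theorem neutral_groupMember_ECG_nonneg_general
    (n : ℕ) (G : Finset (Fin n))
    (σ : ℝ) (t : ℤ)
    -- the proposal is a vector of i.i.d. N(0, σ²) components (neutral environment, μ = 0)
    (ν : Measure (Fin n → ℝ))
    (hν : ν = Measure.pi fun _ : Fin n => gaussianReal 0 (⟨σ ^ 2, sq_nonneg σ⟩ : ℝ≥0))
    -- the set of proposals that are accepted: strictly more than `t` votes in favor,
    -- where individualist `i` votes iff `ω i > 0` and group members vote iff `∑_{j∈G} ω j > 0`
    (A : Set (Fin n → ℝ))
    (hA : A = {ω : Fin n → ℝ |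
      t < ((Finset.univ.filter fun i : Fin n =>
        if i ∈ G then 0 < ∑ j ∈ G, ω j else 0 < ω i).card : ℤ)})
    -- `i` is a group member
    (i : Fin n) (hi : i ∈ G) :
    0 ≤ ∫ ω in A, ω i ∂ν := by
  subst hν hA
  exact ViSE.setIntegral_accepted_eval_nonneg _ (gaussianReal_map_neg.trans (by rw [neg_zero]))
    ((memLp_id_gaussianReal 1).integrable le_rfl) t hi

/-- In the one-step ViSE model with a neutral Gaussian proposal generator
(`μ = 0`), the expected capital gain of a group member is nonnegative for every integer
threshold `t`. -/
theorem neutral_groupMember_ECG_nonneg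
    (n : ℕ) (G : Finset (Fin n)) (g ℓ : ℕ)
    (hgcard : G.card = g) (hg1 : 1 ≤ g) (hℓ : ℓ = n - g)
    (σ : ℝ) (hσ : 0 < σ) (t : ℤ)
    -- the proposal is a vector of i.i.d. N(0, σ²) components (neutral environment, μ = 0)
    (ν : Measure (Fin n → ℝ))
    (hν : ν = Measure.pi fun _ : Fin n => gaussianReal 0 (⟨σ ^ 2, sq_nonneg σ⟩ : ℝ≥0))
    -- the set of proposals that are accepted: strictly more than `t` votes in favor,
    -- where individualist `i` votes iff `ω i > 0` and group members vote iff `∑_{j∈G} ω j > 0`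
    (A : Set (Fin n → ℝ))
    (hA : A = {ω : Fin n → ℝ |
      t < ((Finset.univ.filter fun i : Fin n =>
        if i ∈ G then 0 < ∑ j ∈ G, ω j else 0 < ω i).card : ℤ)})
    -- `i` is a group member
    (i : Fin n) (hi : i ∈ G) :
    0 ≤ ∫ ω in A, ω i ∂ν :=
  neutral_groupMember_ECG_nonneg_general n G σ t ν hν A hA i hi
end

section
/- Snowball cooperation scenario: with n = 25, μ = 0, σ = 12, for every integer threshold t with 5 ≤ t ≤ 19 and every group size g with 2 ≤ g ≤ 24, an individualist benefits from joining the group: E_I(g, t) < E_G(g+1, t). -/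
/-- Standard normal probability density function. -/
noncomputable def stdPDF (x : ℝ) : ℝ := (Real.sqrt (2 * Real.pi))⁻¹ * Real.exp (-(x ^ 2) / 2)

/-- Standard normal cumulative distribution function. -/
noncomputable def stdCDF (x : ℝ) : ℝ := ∫ u in Set.Iic x, stdPDF u

/-- `Pkm p k m` = 1 if `k < -1`; `0` if `k ≥ m`; otherwise `∑_{i=k+1}^m C(m,i) p^i (1-p)^(m-i)`. -/
noncomputable def Pkm (p : ℝ) (k : ℤ) (m : ℕ) : ℝ :=
  if k < -1 then 1
  else if (m : ℤ) ≤ k then 0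
  else ∑ i ∈ Finset.range (m + 1),
    if k < (i : ℤ) then (m.choose i : ℝ) * p ^ i * (1 - p) ^ (m - i) else 0

/-- The closed-form expected capital gain of an individualist (Corollary 1):
`E_I(n,g,t,μ,σ) = (r(P_{t−g−1,ℓ−1} − P_{t−g,ℓ}) + μ P_{t−g,ℓ}) Φ(μ_g)
               + (r(P_{t−1,ℓ−1} − P_{t,ℓ}) + μ P_{t,ℓ}) Φ(−μ_g)`,
with `ℓ = n − g`, `q = Φ(μ/σ)`, `p = 1 − q`, `r = σ φ(μ/σ)/q`, `σ_g = σ/√g`, `μ_g = μ/σ_g`. -/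
noncomputable def EI (n g : ℕ) (t : ℤ) (μ σ : ℝ) : ℝ :=
  let ℓ := n - g
  let q := stdCDF (μ / σ)
  let p := 1 - q
  let r := σ * stdPDF (μ / σ) / q
  let σg := σ / Real.sqrt g
  let μg := μ / σg
  (r * (Pkm p (t - g - 1) (ℓ - 1) - Pkm p (t - g) ℓ) + μ * Pkm p (t - g) ℓ) * stdCDF μg
    + (r * (Pkm p (t - 1) (ℓ - 1) - Pkm p t ℓ) + μ * Pkm p t ℓ) * stdCDF (-μg)

/-- The closed-form expected capital gain of a group member (Corollary 1):
`E_G(n,g,t,μ,σ) = (P_{t−g,ℓ} − P_{t,ℓ})(μ Φ(μ_g) + σ_g φ(μ_g)) + μ P_{t,ℓ}`,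
with `ℓ = n − g`, `q = Φ(μ/σ)`, `p = 1 − q`, `σ_g = σ/√g`, `μ_g = μ/σ_g`. -/
noncomputable def EG (n g : ℕ) (t : ℤ) (μ σ : ℝ) : ℝ :=
  let ℓ := n - g
  let q := stdCDF (μ / σ)
  let p := 1 - q
  let σg := σ / Real.sqrt g
  let μg := μ / σg
  (Pkm p (t - g) ℓ - Pkm p t ℓ) * (μ * stdCDF μg + σg * stdPDF μg) + μ * Pkm p t ℓ

/-- `E_I(g,t) = E_I(25, g, t, 0, 12)`: society of `n = 25` agents, neutral environment. -/
noncomputable def EI25 (g : ℕ) (t : ℤ) : ℝ := EI 25 g t 0 12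

/-- `E_G(g,t) = E_G(25, g, t, 0, 12)`: society of `n = 25` agents, neutral environment. -/
noncomputable def EG25 (g : ℕ) (t : ℤ) : ℝ := EG 25 g t 0 12



lemma expArg (x : ℝ) : -(x ^ 2) / 2 = -(1/2) * x ^ 2 := by ring

lemma stdPDF_integrable : MeasureTheory.Integrable stdPDF := by
  unfold stdPDF
  simp only [expArg]
  exact (integrable_exp_neg_mul_sq (by norm_num)).const_mul _

lemma stdPDF_total : ∫ x : ℝ, stdPDF x = 1 := by
  unfold stdPDF
  simp only [expArg]
  rw [MeasureTheory.integral_const_mul, integral_gaussian]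
  rw [show Real.pi / (1/2) = 2 * Real.pi by ring, inv_mul_cancel₀]
  positivity

lemma stdCDF_zero : stdCDF 0 = 1 / 2 := by
  have hsym : ∫ x in Set.Iic (0:ℝ), stdPDF x = ∫ x in Set.Ioi (0:ℝ), stdPDF x := by
    have h := integral_comp_neg_Iic (0:ℝ) stdPDF
    simp only [neg_zero] at h
    rw [← h]
    refine MeasureTheory.setIntegral_congr_fun measurableSet_Iic fun x _ => ?_
    unfold stdPDF
    ring_nf
  have hadd := intervalIntegral.integral_Iic_add_Ioi (b := (0:ℝ)) (f := stdPDF)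
    stdPDF_integrable.integrableOn stdPDF_integrable.integrableOn
  rw [stdPDF_total] at hadd
  unfold stdCDF
  linarith [hsym, hadd]

lemma stdPDF_zero : stdPDF 0 = (Real.sqrt (2 * Real.pi))⁻¹ := by simp [stdPDF]

def chooseFast (n k : ℕ) : ℕ := n.descFactorial k / k.factorial
def NkmZ (k : ℤ) (m : ℕ) : ℤ :=
  if k < -1 then 2 ^ m
  else if (m : ℤ) ≤ k then 0
  else ∑ i ∈ Finset.range (m + 1), if k < (i : ℤ) then (chooseFast m i : ℤ) else 0

lemma chooseFast_eq (n k : ℕ) : chooseFast n k = n.choose k :=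
  (Nat.choose_eq_descFactorial_div_factorial n k).symm

lemma Pkm_half (k : ℤ) (m : ℕ) : Pkm (1/2) k m = (NkmZ k m : ℝ) / 2 ^ m := by
  unfold Pkm NkmZ
  split_ifs with h1 h2
  · push_cast
    rw [div_self (by positivity)]
  · simp
  · push_cast
    rw [Finset.sum_div]
    refine Finset.sum_congr rfl fun i hi => ?_
    rw [Finset.mem_range] at hi
    split_ifs with h3
    · rw [chooseFast_eq]
      rw [show (1:ℝ) - 1/2 = 1/2 by norm_num]
      rw [mul_assoc, ← pow_add, show i + (m - i) = m by omega]
      rw [one_div, inv_pow, div_eq_mul_inv]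
    · simp

def snowCond (g : ℕ) (t : ℤ) : Prop :=
  let A := NkmZ (t - g - 1) (24 - g)
  let B := NkmZ (t - g) (25 - g)
  let C := NkmZ (t - 1) (24 - g)
  let D := NkmZ t (25 - g)
  let E := NkmZ t (24 - g)
  let S := 2 * A - B + 2 * C - D
  let Dd := 2 * (A - E)
  (S < 0 ∧ 0 ≤ Dd) ∨ (0 ≤ S ∧ 0 < Dd ∧ (g + 1 : ℤ) * S ^ 2 < Dd ^ 2)

instance (g : ℕ) (t : ℤ) : Decidable (snowCond g t) := by unfold snowCond; infer_instance

lemma key_sqrt (r s d : ℝ) (hr : 0 < r) (hrs : r ^ 2 * s ^ 2 < d ^ 2 ∨ s < 0 ∧ 0 ≤ d)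
    (hd : 0 ≤ d) (hs : s < 0 ∨ 0 ≤ s) : r * s < d := by
  rcases hrs with h | ⟨h1, h2⟩
  · rcases hs with hs | hs
    · nlinarith
    · nlinarith [mul_nonneg hr.le hs]
  · nlinarith

lemma main_red (g : ℕ) (t : ℤ) (hg1 : 2 ≤ g) (hg2 : g ≤ 24) (h : snowCond g t) :
    EI25 g t < EG25 (g + 1) t := by
  have e1 : 25 - g - 1 = 24 - g := by omega
  have e2 : 25 - (g + 1) = 24 - g := by omega
  have e3 : 25 - g = (24 - g) + 1 := by omega
  have harg : t - ((g : ℤ) + 1) = t - g - 1 := by ring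
  unfold EI25 EG25 EI EG
  simp only [e1, e2, e3, Nat.cast_add, Nat.cast_one, harg, zero_div, neg_zero, zero_mul,
    mul_zero, add_zero, zero_add, stdCDF_zero, stdPDF_zero,
    show (0:ℝ)/12 = 0 by norm_num, show (1:ℝ) - 1/2 = 1/2 by norm_num, Pkm_half,
    Nat.add_sub_cancel, pow_succ]
  set c := (Real.sqrt (2 * Real.pi))⁻¹ with hc
  have hcpos : 0 < c := by
    rw [hc]; rw [inv_pos]; exact Real.sqrt_pos.mpr (by positivity)
  set a := (NkmZ (t - g - 1) (24 - g) : ℝ) with ha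
  set b := (NkmZ (t - g) ((24 - g) + 1) : ℝ) with hb
  set cc := (NkmZ (t - 1) (24 - g) : ℝ) with hcc
  set d := (NkmZ t ((24 - g) + 1) : ℝ) with hd2
  set e := (NkmZ t (24 - g) : ℝ) with he
  set Q := (2:ℝ) ^ (24 - g) with hQdef
  have hQ : (0:ℝ) < Q := by rw [hQdef]; positivity
  have hr : (0:ℝ) < Real.sqrt ((g:ℝ) + 1) := Real.sqrt_pos.mpr (by positivity)
  have hr2 : Real.sqrt ((g:ℝ) + 1) ^ 2 = (g:ℝ) + 1 := Real.sq_sqrt (by positivity)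
  unfold snowCond at h
  simp only [e3] at h
  have key : Real.sqrt ((g:ℝ) + 1) * (2*a - b + 2*cc - d) < 2*(a - e) := by
    rw [ha, hb, hcc, hd2, he]
    apply key_sqrt _ _ _ hr
    · rcases h with ⟨h1, h2⟩ | ⟨h1, h2, h3⟩
      · right
        constructor
        · exact_mod_cast h1
        · exact_mod_cast h2
      · left
        rw [hr2]
        exact_mod_cast h3
    · rcases h with ⟨h1, h2⟩ | ⟨h1, h2, h3⟩
      · exact_mod_cast h2
      · exact_mod_cast h2.le
    · rcases h with ⟨h1, h2⟩ | ⟨h1, h2, h3⟩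
      · left; exact_mod_cast h1
      · right; exact_mod_cast h1
  have lhs_eq : 12 * c / (1 / 2) * (a / Q - b / (Q * 2)) * (1 / 2)
      + 12 * c / (1 / 2) * (cc / Q - d / (Q * 2)) * (1 / 2)
      = 6 * c * (2*a - b + 2*cc - d) / Q := by ring
  have rhs_eq : (a / Q - e / Q) * (12 / Real.sqrt ((g:ℝ) + 1) * c)
      = 6 * c * (2*(a - e)) / (Q * Real.sqrt ((g:ℝ) + 1)) := by
    field_simp
    ring
  rw [lhs_eq, rhs_eq, div_lt_div_iff₀ hQ (by positivity)]
  nlinarith [mul_lt_mul_of_pos_left key (show (0:ℝ) < 6 * c * Q by positivity)]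

/-- Snowball cooperation scenario: with `n = 25`, `μ = 0`, `σ = 12`, for
every integer threshold `5 ≤ t ≤ 19` and every group size `2 ≤ g ≤ 24`, an individualist
benefits from joining the group: `E_I(g, t) < E_G(g+1, t)`. -/
theorem snowball_cooperation
    (t : ℤ) (ht1 : 5 ≤ t) (ht2 : t ≤ 19)
    (g : ℕ) (hg1 : 2 ≤ g) (hg2 : g ≤ 24) :
    EI25 g t < EG25 (g + 1) t := by
  have H : ∀ g ∈ Finset.Icc 2 24, ∀ t ∈ Finset.Icc (5:ℤ) 19, snowCond g t := by decide
  exact main_red g t hg1 hg2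
    (H g (Finset.mem_Icc.mpr ⟨hg1, hg2⟩) t (Finset.mem_Icc.mpr ⟨ht1, ht2⟩))
end

section
/- Every clique-like society is an equilibrium: with n = 25, μ = 0, σ = 12, for every integer threshold t with 1 ≤ t ≤ 23, leaving the all-encompassing group is unprofitable: E_G(25, t) ≥ E_I(24, t). -/
lemma Pkm_neg (p : ℝ) (k : ℤ) (m : ℕ) (hk : k < 0) : Pkm p k m = 1 := by
  unfold Pkm
  rcases lt_or_ge k (-1) with h | h
  · simp [h]
  · have hk1 : k = -1 := le_antisymm (by omega) h
    subst hk1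
    rw [if_neg (by omega), if_neg (by omega)]
    have hc : ∀ i ∈ Finset.range (m+1), (if (-1:ℤ) < (i:ℤ) then (m.choose i : ℝ) * p ^ i * (1 - p) ^ (m - i) else 0) = (m.choose i : ℝ) * p ^ i * (1 - p) ^ (m - i) := by
      intro i _; rw [if_pos (by omega)]
    rw [Finset.sum_congr rfl hc]
    calc ∑ i ∈ Finset.range (m+1), (m.choose i : ℝ) * p ^ i * (1 - p) ^ (m - i)
        = (p + (1-p))^m := by
          rw [add_pow]; exact Finset.sum_congr rfl (fun i _ => by ring)
      _ = 1 := by norm_num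

lemma Pkm_ge (p : ℝ) (k : ℤ) (m : ℕ) (hk : (m:ℤ) ≤ k) : Pkm p k m = 0 := by
  unfold Pkm
  rw [if_neg (by omega), if_pos hk]

/-- Every clique-like society is an equilibrium: with `n = 25`, `μ = 0`,
`σ = 12`, for every integer threshold `1 ≤ t ≤ 23`, leaving the all-encompassing group is
unprofitable: `E_G(25, t) ≥ E_I(24, t)`. -/
theorem clique_equilibrium
    (t : ℤ) (ht1 : 1 ≤ t) (ht2 : t ≤ 23) :
    EG25 25 t ≥ EI25 24 t := by
  unfold EG25 EI25 EG EI
  have e1 : ∀ p:ℝ, ∀ m:ℕ, Pkm p (t - (25:ℕ)) m = 1 := fun p m => Pkm_neg _ _ _ (by push_cast; omega)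
  have e2 : ∀ p:ℝ, Pkm p t 0 = 0 := fun p => Pkm_ge _ _ _ (by omega)
  have e3 : ∀ p:ℝ, Pkm p (t - (24:ℕ) - 1) 0 = 1 := fun p => Pkm_neg _ _ _ (by push_cast; omega)
  have e4 : ∀ p:ℝ, Pkm p (t - (24:ℕ)) 1 = 1 := fun p => Pkm_neg _ _ _ (by push_cast; omega)
  have e5 : ∀ p:ℝ, Pkm p (t - 1) 0 = 0 := fun p => Pkm_ge _ _ _ (by omega)
  have e6 : ∀ p:ℝ, Pkm p t 1 = 0 := fun p => Pkm_ge _ _ _ (by omega)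
  simp only [e1, e2, e3, e4, e5, e6]
  norm_num
  unfold stdPDF
  positivity
end
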